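/- Let J ∈ B(H) be an anti self-adjoint unitary operator on H = ℓ²(ℕ, ℍ) and m ∈ 𝕊. Then H_+^{Jm} := {u ∈ H : Ju = um} is a nonzero closed subset of H, it is closed under addition and under right multiplication by scalars from ℂ_m, and for all u, v ∈ H_+^{Jm} the inner product ⟨u, v⟩ lies in ℂ_m. -/

import Mathlib

noncomputable section

open Quaternion Filter Topology

/-- The division ring `ℍ` of real quaternions. -/
abbrev Hq := Quaternion ℝ

/-- The quaternionic Hilbert space `H = ℓ²(ℕ, ℍ)`. -/
abbrev Hsp := lp (fun _ : ℕ => Hq) 2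

/-- Right scalar multiplication `x ↦ x · q` on `ℓ²(ℕ, ℍ)` (coordinatewise right
multiplication by the quaternion `q`). -/
def rsmul (q : Hq) (x : Hsp) : Hsp := MulOpposite.op q • x

/-- The quaternionic inner product `⟨x, y⟩ = ∑ₙ x̄ₙ yₙ`. -/
def qinner (x y : Hsp) : Hq := ∑' n, star (x n) * y n

/-- The set `𝕊` of unit imaginary quaternions. -/
def QS : Set Hq := {q | star q = -q ∧ ‖q‖ = 1}

/-- The slice complex plane `ℂ_m = {α + mβ : α, β ∈ ℝ}`. -/
def sliceC (m : Hq) : Set Hq := {q | ∃ α β : ℝ, q = (α : Hq) + m * (β : Hq)}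

/-- The closed upper half slice plane `ℂ_m⁺ = {α + mβ : α ∈ ℝ, β ≥ 0}`. -/
def sliceCplus (m : Hq) : Set Hq :=
  {q | ∃ α β : ℝ, 0 ≤ β ∧ q = (α : Hq) + m * (β : Hq)}

/-- `T : H → H` is a bounded right linear operator, i.e. `T ∈ B(H)`. -/
def IsBoundedRightLinear (T : Hsp → Hsp) : Prop :=
  (∀ x y, T (x + y) = T x + T y) ∧ (∀ q x, T (rsmul q x) = rsmul q (T x)) ∧
    ∃ M : ℝ, ∀ x, ‖T x‖ ≤ M * ‖x‖

/-- `S` is the adjoint of the (bounded) operator `T`: `⟨y, Tx⟩ = ⟨Sy, x⟩` for all `x, y`. -/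
def AdjointOf (T S : Hsp → Hsp) : Prop := ∀ x y, qinner y (T x) = qinner (S y) x

/-- `T` is anti self-adjoint: `T* = -T`. -/
def IsAntiSelfAdjoint (T : Hsp → Hsp) : Prop := AdjointOf T (fun x => -(T x))

/-- `T` is unitary: `T*T = TT* = I`. -/
def IsUnitaryOp (T : Hsp → Hsp) : Prop :=
  ∃ S, AdjointOf T S ∧ (∀ x, S (T x) = x) ∧ (∀ x, T (S x) = x)

/-- The slice Hilbert space `H₊^{Jm} = {u ∈ H : Ju = um}`. -/
def Hplus (J : Hsp → Hsp) (m : Hq) : Set Hsp := {u | J u = rsmul m u}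

/-- `H₋^{Jm} = {u ∈ H : Ju = -um}`. -/
def Hminus (J : Hsp → Hsp) (m : Hq) : Set Hsp := {u | J u = -(rsmul m u)}

/-- `e` is an orthonormal basis of the (closed subspace given by the) set `S`:
each `e r` lies in `S`, the `e r` are orthonormal, and every `x ∈ S` expands as
`x = ∑ᵣ (e r) ⟨e r, x⟩`. Taking `S = Set.univ` gives orthonormal bases of `H`. -/
def IsONBasisOn (S : Set Hsp) (e : ℕ → Hsp) : Prop :=
  (∀ r, e r ∈ S) ∧ (∀ r s, qinner (e r) (e s) = if r = s then 1 else 0) ∧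
    ∀ x ∈ S, HasSum (fun r => rsmul (qinner (e r) x) (e r)) x

/-- A (possibly unbounded) operator in `H`: a domain together with an assignment of
values (only the values on the domain are relevant). -/
structure QOp where
  dom : Set Hsp
  app : Hsp → Hsp

/-- The operator `T` is right linear: its domain is a right `ℍ`-submodule and `T`
is additive and right `ℍ`-homogeneous on it. -/
def QOp.IsRightLinear (T : QOp) : Prop :=
  (0 ∈ T.dom) ∧
  (∀ x ∈ T.dom, ∀ y ∈ T.dom, x + y ∈ T.dom ∧ T.app (x + y) = T.app x + T.app y) ∧
  (∀ x ∈ T.dom, ∀ q : Hq, rsmul q x ∈ T.dom ∧ T.app (rsmul q x) = rsmul q (T.app x))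

/-- `T` is densely defined. -/
def QOp.IsDenselyDefined (T : QOp) : Prop := Dense T.dom

/-- `T` is a closed operator: its graph is closed in `H × H`. -/
def QOp.IsClosedOp (T : QOp) : Prop :=
  IsClosed {p : Hsp × Hsp | p.1 ∈ T.dom ∧ p.2 = T.app p.1}

/-- `S` is the adjoint `T*` of `T`: the domain of `S` is
`{y : x ↦ ⟨y, Tx⟩ is continuous on D(T)}` and `⟨y, Tx⟩ = ⟨Sy, x⟩` there. -/
def QOp.IsAdjointOf (T S : QOp) : Prop :=
  S.dom = {y | ContinuousOn (fun x => qinner y (T.app x)) T.dom} ∧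
  ∀ y ∈ S.dom, ∀ x ∈ T.dom, qinner y (T.app x) = qinner (S.app y) x

/-- Composition `S ∘ T` of partial operators, with the natural domain. -/
def QOp.comp (S T : QOp) : QOp :=
  ⟨{x ∈ T.dom | T.app x ∈ S.dom}, fun x => S.app (T.app x)⟩

/-- Equality of partial operators: equal domains and equal values on the domain. -/
def QOp.Eq (A B : QOp) : Prop := A.dom = B.dom ∧ ∀ x ∈ A.dom, A.app x = B.app x

/-- `T` is normal: `T*T = TT*` (including equality of the domains). -/
def QOp.IsNormal (T : QOp) : Prop :=
  ∃ S : QOp, T.IsAdjointOf S ∧ QOp.Eq (S.comp T) (T.comp S)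

/-- `T` is compact (as an operator on the subspace `S` of `H`): the image of the
closed unit ball of `S` is relatively compact. -/
def IsCompactOn (T : Hsp → Hsp) (S : Set Hsp) : Prop :=
  IsCompact (closure (T '' (Metric.closedBall 0 1 ∩ S)))

/-- `T` has squared Hilbert–Schmidt norm `v` on the subspace `S`:
`∑ᵣ ‖T eᵣ‖² = v` for some orthonormal basis `e` of `S`. -/
def HasHSNormSqOn (T : Hsp → Hsp) (S : Set Hsp) (v : ℝ) : Prop :=
  ∃ e : ℕ → Hsp, IsONBasisOn S e ∧ HasSum (fun r => ‖T (e r)‖ ^ 2) v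

/-- `T` is diagonal: there are an orthonormal basis `{φᵣ}` of `H` contained in `D(T)`
and quaternions `qᵣ` with `Tφᵣ = φᵣ qᵣ`. -/
def QOp.IsDiagonal (T : QOp) : Prop :=
  ∃ e : ℕ → Hsp, IsONBasisOn Set.univ e ∧ (∀ r, e r ∈ T.dom) ∧
    ∃ q : ℕ → Hq, ∀ r, T.app (e r) = rsmul (q r) (e r)

/-- The operator `Δ_q(N) = N² - N(q + q̄) + I|q|²` for a bounded operator `N`. -/
def sphDeltaB (N : Hsp → Hsp) (q : Hq) : Hsp → Hsp :=
  fun x => N (N x) - rsmul (q + star q) (N x) + rsmul ((normSq q : ℝ) : Hq) x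

/-- `q` lies in the spherical resolvent of the bounded operator `N`. -/
def inSphResolventB (N : Hsp → Hsp) (q : Hq) : Prop :=
  (∀ x, sphDeltaB N q x = 0 → x = 0) ∧
  Dense (Set.range (sphDeltaB N q)) ∧
  ∃ M : ℝ, ∀ x, ‖x‖ ≤ M * ‖sphDeltaB N q x‖

/-- The spherical spectrum of a bounded operator. -/
def sphSpectrumB (N : Hsp → Hsp) : Set Hq := {q | ¬ inSphResolventB N q}

/-- The domain `D(N²)` of the square of a partial operator. -/
def QOp.sqDom (N : QOp) : Set Hsp := {x ∈ N.dom | N.app x ∈ N.dom}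

/-- The map underlying `Δ_q(N) = N² - N(q + q̄) + I|q|²`, defined on `D(N²)`. -/
def sphDeltaU (N : QOp) (q : Hq) : Hsp → Hsp :=
  fun x => N.app (N.app x) - rsmul (q + star q) (N.app x) + rsmul ((normSq q : ℝ) : Hq) x

/-- `q` lies in the spherical resolvent of the operator `N ∈ C(H)`. -/
def inSphResolventU (N : QOp) (q : Hq) : Prop :=
  (∀ x ∈ N.sqDom, sphDeltaU N q x = 0 → x = 0) ∧
  Dense (sphDeltaU N q '' N.sqDom) ∧
  ∃ M : ℝ, ∀ x ∈ N.sqDom, ‖x‖ ≤ M * ‖sphDeltaU N q x‖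

/-- The spherical spectrum of `N ∈ C(H)`. -/
def sphSpectrumU (N : QOp) : Set Hq := {q | ¬ inSphResolventU N q}

/-- The circularization `Ω_K = {α + jβ : α + mβ ∈ K, j ∈ 𝕊}` of `K ⊆ ℂ_m`. -/
def circ (m : Hq) (K : Set Hq) : Set Hq :=
  {p | ∃ α β : ℝ, ∃ j ∈ QS, ((α : Hq) + m * (β : Hq) ∈ K) ∧ p = (α : Hq) + j * (β : Hq)}

/-! Anti self-adjointness says that `-J` is an adjoint of `J`; adjoints are unique, so unitarity
gives `J² = -1`. Then `z ↦ z - (Jz)m` maps `H` into `H₊^{Jm}`, and if it killed both a nonzero `z`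
and `zc` with `mc ≠ cm`, we would get `(Jz)(mc - cm) = 0`. An anti self-adjoint `J` with
`J² = -1` preserves `⟨·,·⟩`, so for `u, v ∈ H₊^{Jm}` we get `⟨u, v⟩ = m̄⟨u, v⟩m`: the inner
product commutes with `m`, and the centraliser of `m ∈ 𝕊` is `ℂ_m`. -/

lemma rsmul_apply (q : Hq) (x : Hsp) (n : ℕ) : rsmul q x n = x n * q := rfl

lemma rsmul_rsmul (p q : Hq) (x : Hsp) : rsmul p (rsmul q x) = rsmul (q * p) x := by
  unfold rsmul
  rw [smul_smul, ← MulOpposite.op_mul]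

lemma rsmul_add (q : Hq) (x y : Hsp) : rsmul q (x + y) = rsmul q x + rsmul q y :=
  smul_add _ _ _

lemma rsmul_sub (q : Hq) (x y : Hsp) : rsmul q (x - y) = rsmul q x - rsmul q y :=
  smul_sub _ _ _

lemma rsmul_neg (q : Hq) (x : Hsp) : rsmul q (-x) = -rsmul q x :=
  smul_neg _ _

lemma rsmul_neg_one (x : Hsp) : rsmul (-1) x = -x := by
  simp [rsmul]

lemma rsmul_zero (q : Hq) : rsmul q 0 = 0 :=
  smul_zero _

lemma rsmul_left_injective {x : Hsp} (hx : x ≠ 0) : Function.Injective (rsmul · x) := by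
  intro p q h
  obtain ⟨n, hn⟩ : ∃ n, x n ≠ 0 := by
    by_contra! h0
    exact hx (lp.ext (funext h0))
  exact mul_left_cancel₀ hn (congrArg (· n) h)

lemma summable_norm_mul_norm (x y : Hsp) : Summable fun n => ‖x n‖ * ‖y n‖ :=
  lp.summable_mul (p := 2) (q := 2) (by simpa using Real.HolderConjugate.two_two) x y

lemma summable_star_mul (x y : Hsp) : Summable fun n => star (x n) * y n :=
  (summable_norm_mul_norm x y).of_norm_bounded fun n => by
    rw [norm_mul, _root_.norm_star]

lemma qinner_sub_left (x y z : Hsp) : qinner (x - y) z = qinner x z - qinner y z := by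
  simp only [qinner, lp.coeFn_sub, Pi.sub_apply, star_sub, sub_mul]
  exact (summable_star_mul x z).tsum_sub (summable_star_mul y z)

lemma qinner_rsmul_left (p : Hq) (x y : Hsp) : qinner (rsmul p x) y = star p * qinner x y := by
  simp only [qinner, rsmul_apply, star_mul, mul_assoc, tsum_mul_left]

lemma qinner_rsmul_right (p : Hq) (x y : Hsp) : qinner x (rsmul p y) = qinner x y * p := by
  simp only [qinner, rsmul_apply, ← mul_assoc, tsum_mul_right]

lemma eq_zero_of_qinner_self_eq_zero {z : Hsp} (h : qinner z z = 0) : z = 0 := by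
  have hnormSq : ∀ n, star (z n) * z n = ((‖z n‖ * ‖z n‖ : ℝ) : Hq) := fun n => by
    rw [star_mul_self, normSq_eq_norm_mul_self]
  simp only [qinner, hnormSq, tsum_coe] at h
  rw [← coe_zero, coe_inj] at h
  have hsum := (summable_norm_mul_norm z z).hasSum
  rw [h, hasSum_zero_iff_of_nonneg fun n => mul_self_nonneg ‖z n‖] at hsum
  exact lp.ext (funext fun n => norm_eq_zero.mp (mul_self_eq_zero.mp (congrFun hsum n)))

lemma AdjointOf.unique {T S S' : Hsp → Hsp} (hS : AdjointOf T S) (hS' : AdjointOf T S') :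
    S = S' := by
  funext y
  rw [← sub_eq_zero]
  apply eq_zero_of_qinner_self_eq_zero
  rw [qinner_sub_left, ← hS, ← hS', sub_self]

lemma IsAntiSelfAdjoint.apply_apply_eq_neg {J : Hsp → Hsp} (hJa : IsAntiSelfAdjoint J)
    (hJu : IsUnitaryOp J) (x : Hsp) : J (J x) = -x := by
  obtain ⟨S, hS, hSJ, -⟩ := hJu
  have hSJx := hSJ x
  rw [hS.unique hJa] at hSJx
  exact neg_eq_iff_eq_neg.mp hSJx

lemma IsAntiSelfAdjoint.qinner_apply_apply {J : Hsp → Hsp} (hJa : IsAntiSelfAdjoint J)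
    (hJJ : ∀ x, J (J x) = -x) (u v : Hsp) : qinner (J u) (J v) = qinner u v := by
  simpa only [hJJ, neg_neg] using hJa v (J u)

section QS

variable {m : Hq} (hm : m ∈ QS)
include hm

lemma re_eq_zero_of_mem_QS : m.re = 0 := by
  have := congrArg (·.re) hm.1
  simp only [re_star, re_neg] at this
  linarith

lemma normSq_eq_one_of_mem_QS : normSq m = 1 := by
  rw [normSq_eq_norm_mul_self, hm.2, one_mul]

lemma mul_self_eq_neg_one_of_mem_QS : m * m = -1 := by
  rw [← neg_neg (m * m), ← mul_neg, ← hm.1, self_mul_star, normSq_eq_one_of_mem_QS hm, coe_one]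

lemma im_sq_sum_eq_one_of_mem_QS : m.imI ^ 2 + m.imJ ^ 2 + m.imK ^ 2 = 1 := by
  have h := normSq_eq_one_of_mem_QS hm
  rw [normSq_def', re_eq_zero_of_mem_QS hm] at h
  linarith

lemma commute_of_star_mul_mul_eq_self_of_mem_QS {q : Hq} (h : star m * q * m = q) :
    Commute m q := by
  calc m * q = m * (star m * q * m) := by rw [h]
    _ = q * m := by rw [← mul_assoc, ← mul_assoc, self_mul_star, normSq_eq_one_of_mem_QS hm,
        coe_one, one_mul]

lemma mem_sliceC_of_commute_of_mem_QS {q : Hq} (h : Commute m q) : q ∈ sliceC m := by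
  have hre := re_eq_zero_of_mem_QS hm
  have hnorm := im_sq_sum_eq_one_of_mem_QS hm
  have hI := congrArg (·.imI) h.eq
  have hJ := congrArg (·.imJ) h.eq
  have hK := congrArg (·.imK) h.eq
  simp only [imI_mul, imJ_mul, imK_mul, hre] at hI hJ hK
  have e1 : m.imI * q.imJ = m.imJ * q.imI := by linarith
  have e2 : m.imI * q.imK = m.imK * q.imI := by linarith
  have e3 : m.imJ * q.imK = m.imK * q.imJ := by linarith
  -- `e1`–`e3` say `im q × im m = 0`, so `im q = ⟨im m, im q⟩ m` as `m` is a unit vector.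
  refine ⟨q.re, m.imI * q.imI + m.imJ * q.imJ + m.imK * q.imK, ?_⟩
  ext <;> simp only [re_add, imI_add, imJ_add, imK_add, re_mul, imI_mul, imJ_mul, imK_mul,
    re_coe, imI_coe, imJ_coe, imK_coe, hre]
  · ring
  · linear_combination -q.imI * hnorm - m.imJ * e1 - m.imK * e2
  · linear_combination -q.imJ * hnorm + m.imI * e1 - m.imK * e3
  · linear_combination -q.imK * hnorm + m.imI * e2 + m.imJ * e3

lemma exists_not_commute_of_mem_QS : ∃ c : Hq, ¬Commute m c := by
  by_contra! h
  have hcross : ∀ c : Hq, m.imJ * c.imK = m.imK * c.imJ ∧ m.imK * c.imI = m.imI * c.imK := by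
    intro c
    have hI := congrArg (·.imI) (h c).eq
    have hJ := congrArg (·.imJ) (h c).eq
    simp only [imI_mul, imJ_mul, re_eq_zero_of_mem_QS hm] at hI hJ
    constructor <;> linarith
  obtain ⟨hK, -⟩ := hcross ⟨0, 0, 1, 0⟩
  obtain ⟨hJ, hI⟩ := hcross ⟨0, 0, 0, 1⟩
  have hnorm := im_sq_sum_eq_one_of_mem_QS hm
  simp only [mul_zero, mul_one] at hK hJ hI
  rw [← hI, hJ, ← hK] at hnorm
  norm_num at hnorm

end QS

lemma commute_of_mem_sliceC {m q : Hq} (hq : q ∈ sliceC m) : Commute m q := by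
  obtain ⟨α, β, rfl⟩ := hq
  exact (coe_commute α m).symm.add_right ((Commute.refl m).mul_right (coe_commute β m).symm)

namespace IsBoundedRightLinear

variable {J : Hsp → Hsp} (hJ : IsBoundedRightLinear J)
include hJ

lemma map_sub (x y : Hsp) : J (x - y) = J x - J y :=
  (AddMonoidHom.mk' J hJ.1).map_sub x y

lemma continuous : Continuous J := by
  obtain ⟨M, hM⟩ := hJ.2.2
  exact AddMonoidHomClass.continuous_of_bound (AddMonoidHom.mk' J hJ.1) M hM

lemma isClosed_Hplus (m : Hq) : IsClosed (Hplus J m) :=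
  isClosed_eq hJ.continuous (continuous_const_smul _)

lemma add_mem_Hplus {m : Hq} {u v : Hsp} (hu : u ∈ Hplus J m) (hv : v ∈ Hplus J m) :
    u + v ∈ Hplus J m := by
  change J _ = rsmul m _
  rw [hJ.1, hu, hv, rsmul_add]

lemma rsmul_mem_Hplus {m q : Hq} {u : Hsp} (hu : u ∈ Hplus J m) (hq : Commute m q) :
    rsmul q u ∈ Hplus J m := by
  change J _ = rsmul m _
  rw [hJ.2.1, hu, rsmul_rsmul, rsmul_rsmul, hq.eq]

lemma sub_rsmul_apply_mem_Hplus {m : Hq} (hJJ : ∀ x, J (J x) = -x) (hm : m * m = -1) (z : Hsp) :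
    z - rsmul m (J z) ∈ Hplus J m := by
  change J _ = rsmul m _
  rw [hJ.map_sub, hJ.2.1, hJJ, rsmul_neg, rsmul_sub, rsmul_rsmul, hm, rsmul_neg_one]
  abel

lemma exists_ne_zero_mem_Hplus {m : Hq} (hm : m ∈ QS) (hJJ : ∀ x, J (J x) = -x) :
    ∃ u ∈ Hplus J m, u ≠ 0 := by
  have hmem := hJ.sub_rsmul_apply_mem_Hplus hJJ (mul_self_eq_neg_one_of_mem_QS hm)
  obtain ⟨c, hc⟩ := exists_not_commute_of_mem_QS hm
  set z : Hsp := lp.single 2 0 1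
  have hz : z ≠ 0 := fun h => one_ne_zero (α := Hq) (by simpa [z] using congrArg (· 0) h)
  by_contra! h
  have hz' : z = rsmul m (J z) := sub_eq_zero.mp (h _ (hmem z))
  have hcz : rsmul c z = rsmul m (J (rsmul c z)) := sub_eq_zero.mp (h _ (hmem _))
  have hJz : J z ≠ 0 := fun h0 => hz (by rw [hz', h0, rsmul_zero])
  refine hc (rsmul_left_injective hJz ?_)
  calc rsmul (m * c) (J z) = rsmul c z := by rw [← rsmul_rsmul, ← hz']
    _ = rsmul (c * m) (J z) := by rw [hcz, hJ.2.1, rsmul_rsmul]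

end IsBoundedRightLinear

lemma IsAntiSelfAdjoint.qinner_mem_sliceC_of_mem_Hplus {J : Hsp → Hsp} (hJa : IsAntiSelfAdjoint J)
    (hJJ : ∀ x, J (J x) = -x) {m : Hq} (hm : m ∈ QS) {u v : Hsp} (hu : u ∈ Hplus J m)
    (hv : v ∈ Hplus J m) : qinner u v ∈ sliceC m := by
  refine mem_sliceC_of_commute_of_mem_QS hm (commute_of_star_mul_mul_eq_self_of_mem_QS hm ?_)
  rw [← qinner_rsmul_left, ← qinner_rsmul_right, ← hu, ← hv, hJa.qinner_apply_apply hJJ]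

/-- `H₊^{Jm} = {u : Ju = um}` is a nonzero closed subset of `H`, closed
under addition and under right multiplication by scalars from `ℂ_m`, and the inner
product of two of its elements lies in `ℂ_m`. -/
theorem slice_hilbert_space_properties (J : Hsp → Hsp) (m : Hq) (hm : m ∈ QS)
    (hJlin : IsBoundedRightLinear J) (hJa : IsAntiSelfAdjoint J) (hJu : IsUnitaryOp J) :
    (∃ u ∈ Hplus J m, u ≠ 0) ∧
    IsClosed (Hplus J m) ∧
    (∀ u ∈ Hplus J m, ∀ v ∈ Hplus J m, u + v ∈ Hplus J m) ∧
    (∀ u ∈ Hplus J m, ∀ q ∈ sliceC m, rsmul q u ∈ Hplus J m) ∧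
    (∀ u ∈ Hplus J m, ∀ v ∈ Hplus J m, qinner u v ∈ sliceC m) := by
  have hJJ := hJa.apply_apply_eq_neg hJu
  exact ⟨hJlin.exists_ne_zero_mem_Hplus hm hJJ, hJlin.isClosed_Hplus m,
    fun u hu v hv => hJlin.add_mem_Hplus hu hv,
    fun u hu q hq => hJlin.rsmul_mem_Hplus hu (commute_of_mem_sliceC hq),
    fun u hu v hv => hJa.qinner_mem_sliceC_of_mem_Hplus hJJ hm hu hv⟩
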